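/- Let β = (βx, βy) ∈ (0,∞)², β_max = max(βx, βy), and assume dom f* is nonempty and closed. Then for every z = (x,y) ∈ X × Y with f(x) < +∞, with a = Proj_{dom f*}(−Aᵀy), the primal–dual feasibility errors are bounded by the self-centered smoothed gap: ‖a + Aᵀy‖² + ‖Ax − b‖² ≤ 2 β_max G_β(z). -/

import Mathlib

open scoped RealInnerProductSpace
open Filter Topology Metric

noncomputable section

variable {X Y : Type*} [NormedAddCommGroup X] [InnerProductSpace ℝ X]
  [NormedAddCommGroup Y] [InnerProductSpace ℝ Y]

/-- The Lagrangian `L(x, y) = f(x) + ⟪A x − b, y⟫`. -/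
def Lag (f : X → EReal) (A : X →L[ℝ] Y) (b : Y) (x : X) (y : Y) : EReal :=
  f x + ((⟪A x - b, y⟫ : ℝ) : EReal)

/-- The smoothed duality gap `G_β((x, y); (xd, yd))`, valued in `ℝ ∪ {+∞}` (here `EReal`;
the inner expression is `−∞` exactly when `f x' = +∞`, so such `x'` do not contribute). -/
def smoothedGap (f : X → EReal) (A : X →L[ℝ] Y) (b : Y) (βx βy : ℝ)
    (x : X) (y : Y) (xd : X) (yd : Y) : EReal :=
  ⨆ w : X × Y,
    (Lag f A b x w.2 - Lag f A b w.1 y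
      - ((βx / 2 * ‖w.1 - xd‖ ^ 2 + βy / 2 * ‖w.2 - yd‖ ^ 2 : ℝ) : EReal))

/-- `f` is proper: never `−∞` and not identically `+∞`. -/
def EProper (f : X → EReal) : Prop := (∀ u, f u ≠ ⊥) ∧ ∃ u, f u ≠ ⊤

/-- Convexity for an `EReal`-valued function. -/
def EConvexOn (f : X → EReal) : Prop :=
  ∀ u v : X, ∀ t : ℝ, 0 ≤ t → t ≤ 1 →
    f (t • u + (1 - t) • v) ≤ (t : EReal) * f u + ((1 - t : ℝ) : EReal) * f v

/-- The subdifferential `∂f(x) = {q | ∀ u, f(u) ≥ f(x) + ⟪q, u − x⟫}`. -/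
def ESubdiff (f : X → EReal) (x : X) : Set X :=
  {q | ∀ u : X, f x + ((⟪q, u - x⟫ : ℝ) : EReal) ≤ f u}

/-- `p = Prox_{s f}(v)`: `p` is the (unique) minimizer of `f(·) + (1/(2s))‖· − v‖²`. -/
def IsProx (f : X → EReal) (s : ℝ) (v p : X) : Prop :=
  ∀ u : X, f p + ((1 / (2 * s) * ‖p - v‖ ^ 2 : ℝ) : EReal)
    ≤ f u + ((1 / (2 * s) * ‖u - v‖ ^ 2 : ℝ) : EReal)

/-- The Fenchel–Legendre conjugate `f*(φ) = sup_u (⟪φ, u⟫ − f(u))`. -/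
def fenchel (f : X → EReal) (φ : X) : EReal := ⨆ u : X, (((⟪φ, u⟫ : ℝ) : EReal) - f u)

/-- The domain of the Fenchel conjugate. -/
def fdom (f : X → EReal) : Set X := {φ | fenchel f φ ≠ ⊤}

/-- `a = Proj_S(v)`: `a` is the (unique, for `S` closed convex nonempty) Euclidean
projection of `v` onto `S`. -/
def IsProj (S : Set X) (v a : X) : Prop := a ∈ S ∧ ∀ u ∈ S, ‖a - v‖ ≤ ‖u - v‖

/-- `(xs, ys)` is a saddle point of the Lagrangian. -/
def IsSaddle (f : X → EReal) (A : X →L[ℝ] Y) (b : Y) (xs : X) (ys : Y) : Prop :=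
  ∀ (x' : X) (y' : Y), Lag f A b xs y' ≤ Lag f A b xs ys ∧ Lag f A b xs ys ≤ Lag f A b x' ys

/-- The set of saddle points `Z⋆`. -/
def saddleSet (f : X → EReal) (A : X →L[ℝ] Y) (b : Y) : Set (X × Y) :=
  {zs | IsSaddle f A b zs.1 zs.2}

/-- Euclidean distance from a point of `X × Y` to a set. -/
def distZ (z : X × Y) (S : Set (X × Y)) : ℝ :=
  ⨅ w : S, Real.sqrt (‖z.1 - (w : X × Y).1‖ ^ 2 + ‖z.2 - (w : X × Y).2‖ ^ 2)

/-- The projected duality gap `D(z)`, where `fx = f(x)` and `fa = f*(a)` (both finite). -/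
def PDG (fx fa : ℝ) (A : X →L[ℝ] Y) (At : Y →L[ℝ] X) (b : Y) (a x : X) (y : Y) : ℝ :=
  |fx + fa + ⟪b, y⟫| ^ 2 + ‖a + At y‖ ^ 2 + ‖A x - b‖ ^ 2

/-!
With `v = x − βx⁻¹ Aᵀy`, let `p = prox_{f/βx}(v)`: it exists because `a ∈ dom f*` gives `f` an
affine minorant, so `f + (βx/2)‖· − v‖²` is coercive. The optimality condition says that
`q = βx (x − p) − Aᵀy ∈ ∂f(p)`, hence `q ∈ dom f*` and `‖a + Aᵀy‖ ≤ ‖q + Aᵀy‖ = βx ‖x − p‖`.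
Testing the smoothed gap at `(p, y + βy⁻¹ (Ax − b))` and using the subgradient inequality at `x`
gives `G_β(z) ≥ (βx/2)‖x − p‖² + ‖Ax − b‖²/(2βy)`, which controls both feasibility errors.
-/

theorem LowerSemicontinuous.exists_forall_le_of_isBounded {E β : Type*} [PseudoMetricSpace E]
    [ProperSpace E] [LinearOrder β] [TopologicalSpace β] {g : E → β}
    (hg : LowerSemicontinuous g) (x₀ : E) (h : Bornology.IsBounded {x | g x ≤ g x₀}) :
    ∃ x, ∀ y, g x ≤ g y := by
  obtain ⟨p, -, hp⟩ := (hg.lowerSemicontinuousOn {x | g x ≤ g x₀}).exists_isMinOn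
    ⟨x₀, le_refl (g x₀)⟩ (Metric.isCompact_of_isClosed_isBounded (hg.isClosed_preimage _) h)
  refine ⟨p, fun y => ?_⟩
  rcases le_total (g y) (g x₀) with hy | hy
  · exact hp hy
  · exact (hp (le_refl (g x₀))).trans hy

theorem le_of_forall_mem_Ioc_le_add_mul {a b c : ℝ}
    (h : ∀ t ∈ Set.Ioc (0 : ℝ) 1, a ≤ b + t * c) : a ≤ b := by
  have hlim : Tendsto (fun t => b + t * c) (𝓝[>] 0) (𝓝 b) := by
    have : Tendsto (fun t : ℝ => b + t * c) (𝓝 0) (𝓝 (b + 0 * c)) :=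
      ((continuous_const.add (continuous_id.mul continuous_const)).tendsto 0)
    simpa using this.mono_left nhdsWithin_le_nhds
  exact ge_of_tendsto hlim (Filter.mem_of_superset (Ioc_mem_nhdsGT one_pos) h)

theorem sq_add_sq_le_two_max_mul {βx βy d e r g : ℝ} (hβx : 0 < βx) (hβy : 0 < βy)
    (hr : 0 ≤ r) (hrd : r ≤ βx * d) (hg : βx / 2 * d ^ 2 + e ^ 2 / (2 * βy) ≤ g) :
    r ^ 2 + e ^ 2 ≤ 2 * max βx βy * g := by
  have hd : 0 ≤ d := nonneg_of_mul_nonneg_right (hr.trans hrd) hβx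
  have hx : βx ≤ max βx βy := le_max_left _ _
  have hy : βy ≤ max βx βy := le_max_right _ _
  have hr2 : r ^ 2 ≤ max βx βy * (βx * d ^ 2) := by
    nlinarith [mul_le_mul hrd hrd hr (by positivity)]
  have he2 : e ^ 2 ≤ max βx βy * (e ^ 2 / βy) := by
    rw [mul_div_assoc', le_div_iff₀ hβy]
    nlinarith [sq_nonneg e]
  have : 2 * max βx βy * (βx / 2 * d ^ 2 + e ^ 2 / (2 * βy)) ≤ 2 * max βx βy * g :=
    mul_le_mul_of_nonneg_left hg (by positivity)
  rw [show e ^ 2 / (2 * βy) = e ^ 2 / βy / 2 by ring] at this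
  linarith

theorem inner_add_norm_sub_sq_complete_square {s : ℝ} (hs : s ≠ 0) (φ u v : X) :
    ⟪φ, u⟫ + 1 / (2 * s) * ‖u - v‖ ^ 2
      = 1 / (2 * s) * ‖u - (v - s • φ)‖ ^ 2 + (⟪φ, v⟫ - s / 2 * ‖φ‖ ^ 2) := by
  rw [show u - (v - s • φ) = (u - v) + s • φ by abel, norm_add_sq_real, norm_smul,
    real_inner_smul_right, inner_sub_left, real_inner_comm φ u, real_inner_comm φ v,
    Real.norm_eq_abs, mul_pow, sq_abs]
  field_simp
  ring

section Conjugate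

variable {f : X → EReal}

theorem exists_coe_sub_le_of_mem_fdom {φ : X} (hφ : φ ∈ fdom f) :
    ∃ c : ℝ, ∀ u, ((⟪φ, u⟫ - c : ℝ) : EReal) ≤ f u := by
  refine ⟨(fenchel f φ).toReal, fun u => ?_⟩
  have hu : ((⟪φ, u⟫ : ℝ) : EReal) - f u ≤ (fenchel f φ).toReal :=
    (le_iSup (fun u => ((⟪φ, u⟫ : ℝ) : EReal) - f u) u).trans (EReal.le_coe_toReal hφ)
  induction h : f u using EReal.rec with
  | bot => simp [h] at hu
  | top => exact le_top
  | coe r =>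
    rw [h, ← EReal.coe_sub, EReal.coe_le_coe_iff] at hu
    exact EReal.coe_le_coe_iff.2 (by linarith)

theorem mem_fdom_of_mem_eSubdiff {p q : X} (hq : q ∈ ESubdiff f p) (hp : f p ≠ ⊤)
    (hp' : f p ≠ ⊥) : q ∈ fdom f := by
  obtain ⟨fp, hfp⟩ : ∃ r : ℝ, f p = r := ⟨_, (EReal.coe_toReal hp hp').symm⟩
  refine ne_top_of_le_ne_top (EReal.coe_ne_top (⟪q, p⟫ - fp)) (iSup_le fun u => ?_)
  have hu : f p + ((⟪q, u - p⟫ : ℝ) : EReal) ≤ f u := hq u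
  rw [hfp, ← EReal.coe_add] at hu
  induction h : f u using EReal.rec with
  | bot => simp [h] at hu
  | top => simp
  | coe r =>
    rw [h, EReal.coe_le_coe_iff, inner_sub_right] at hu
    rw [← EReal.coe_sub, EReal.coe_le_coe_iff]
    linarith

end Conjugate

theorem IsProx.ne_top {E : Type*} [NormedAddCommGroup E] {f : E → EReal} {s : ℝ} {v p : E}
    (hp : IsProx f s v p) {x : E} (hx : f x ≠ ⊤) : f p ≠ ⊤ := by
  intro h
  have := hp x
  rw [h, EReal.top_add_coe, top_le_iff] at this
  exact EReal.add_ne_top hx (EReal.coe_ne_top _) this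

section Prox

variable {f : X → EReal}

theorem exists_isProx [ProperSpace X] (hf : EProper f) (hlsc : LowerSemicontinuous f)
    {φ : X} (hφ : φ ∈ fdom f) {s : ℝ} (hs : 0 < s) (v : X) : ∃ p, IsProx f s v p := by
  obtain ⟨hbot, x₀, hx₀⟩ := hf
  obtain ⟨c, hc⟩ := exists_coe_sub_le_of_mem_fdom hφ
  obtain ⟨fx₀, hfx₀⟩ : ∃ r : ℝ, f x₀ = r := ⟨_, (EReal.coe_toReal hx₀ (hbot x₀)).symm⟩
  set g : X → EReal := fun u => f u + ((1 / (2 * s) * ‖u - v‖ ^ 2 : ℝ) : EReal)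
  have hg : LowerSemicontinuous g :=
    hlsc.add' (continuous_coe_real_ereal.comp (by fun_prop)).lowerSemicontinuous
      fun u => EReal.continuousAt_add (Or.inr (EReal.coe_ne_bot _)) (Or.inl (hbot u))
  set w := v - s • φ
  set K := ⟪φ, v⟫ - s / 2 * ‖φ‖ ^ 2 - c
  set m := fx₀ + 1 / (2 * s) * ‖x₀ - v‖ ^ 2
  have hgx₀ : g x₀ = m := by simp only [g, hfx₀, m, EReal.coe_add]
  have hquad : ∀ u, ((1 / (2 * s) * ‖u - w‖ ^ 2 + K : ℝ) : EReal) ≤ g u := by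
    intro u
    have h := add_le_add (hc u) (le_refl ((1 / (2 * s) * ‖u - v‖ ^ 2 : ℝ) : EReal))
    rw [← EReal.coe_add] at h
    refine le_of_eq_of_le ?_ h
    have := inner_add_norm_sub_sq_complete_square hs.ne' φ u v
    simp only [w, K]
    congr 1
    linarith
  refine hg.exists_forall_le_of_isBounded x₀ ?_
  refine (Metric.isBounded_closedBall (x := w) (r := √(2 * s * (m - K)))).subset fun u hu => ?_
  have hu' := (hquad u).trans (hgx₀ ▸ hu)
  rw [EReal.coe_le_coe_iff] at hu'
  rw [Metric.mem_closedBall, dist_eq_norm]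
  refine Real.le_sqrt_of_sq_le ?_
  rw [one_div, ← div_eq_inv_mul, div_add' _ _ _ (by positivity),
    div_le_iff₀ (by positivity)] at hu'
  linarith

variable {s : ℝ} {v p : X}

theorem IsProx.add_inner_le_add_mul (hp : IsProx f s v p) (hconv : EConvexOn f)
    (hbot : ∀ u, f u ≠ ⊥) {u : X} {fp fu : ℝ} (hfp : f p = fp) (hfu : f u = fu) {t : ℝ}
    (ht0 : 0 < t) (ht1 : t ≤ 1) :
    fp + ⟪s⁻¹ • (v - p), u - p⟫ ≤ fu + t * (1 / (2 * s) * ‖u - p‖ ^ 2) := by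
  set ut := t • u + (1 - t) • p
  have hconv' : f ut ≤ ((t * fu + (1 - t) * fp : ℝ) : EReal) := by
    simpa only [hfu, hfp, EReal.coe_add, EReal.coe_mul] using hconv u p t ht0.le ht1
  obtain ⟨ft, hft⟩ : ∃ r : ℝ, f ut = r :=
    ⟨_, (EReal.coe_toReal (ne_top_of_le_ne_top (EReal.coe_ne_top _) hconv') (hbot ut)).symm⟩
  rw [hft, EReal.coe_le_coe_iff] at hconv'
  have hmin := hp ut
  rw [hfp, hft, ← EReal.coe_add, ← EReal.coe_add, EReal.coe_le_coe_iff] at hmin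
  have hnorm : ‖ut - v‖ ^ 2 = ‖p - v‖ ^ 2 + 2 * t * ⟪p - v, u - p⟫ + t ^ 2 * ‖u - p‖ ^ 2 := by
    rw [show ut - v = (p - v) + t • (u - p) by simp only [ut]; module, norm_add_sq_real,
      real_inner_smul_right, norm_smul, Real.norm_eq_abs, mul_pow, sq_abs]
    ring
  have hinner : ⟪s⁻¹ • (v - p), u - p⟫ = -(2 * (1 / (2 * s)) * ⟪p - v, u - p⟫) := by
    rw [real_inner_smul_left, ← neg_sub p v, inner_neg_left]
    field_simp
  rw [hnorm] at hmin
  rw [hinner]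
  refine le_of_mul_le_mul_left ?_ ht0
  nlinarith

theorem IsProx.inv_smul_sub_mem_eSubdiff (hp : IsProx f s v p) (hconv : EConvexOn f)
    (hbot : ∀ u, f u ≠ ⊥) (hp_top : f p ≠ ⊤) : s⁻¹ • (v - p) ∈ ESubdiff f p := by
  intro u
  obtain ⟨fp, hfp⟩ : ∃ r : ℝ, f p = r := ⟨_, (EReal.coe_toReal hp_top (hbot p)).symm⟩
  induction hfu : f u using EReal.rec with
  | bot => exact absurd hfu (hbot u)
  | top => exact le_top
  | coe fu =>
    rw [hfp, ← EReal.coe_add, EReal.coe_le_coe_iff]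
    exact le_of_forall_mem_Ioc_le_add_mul fun t ht =>
      hp.add_inner_le_add_mul hconv hbot hfp hfu ht.1 ht.2

end Prox

theorem coe_le_smoothedGap_self {f : X → EReal} {A : X →L[ℝ] Y} {At : Y →L[ℝ] X} {b : Y}
    (hAt : ∀ (u : X) (v : Y), ⟪A u, v⟫ = ⟪u, At v⟫) {βx βy : ℝ} (hβy : 0 < βy)
    {x p : X} {y : Y} {fx fp : ℝ} (hfx : f x = fx) (hfp : f p = fp) :
    ((fx - fp + ⟪x - p, At y⟫ - βx / 2 * ‖p - x‖ ^ 2 + ‖A x - b‖ ^ 2 / (2 * βy) : ℝ) : EReal)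
      ≤ smoothedGap f A b βx βy x y x y := by
  -- the supremum over the dual variable is attained at `y + βy⁻¹ • (A x - b)`
  refine le_of_eq_of_le ?_ (le_iSup _ (p, y + βy⁻¹ • (A x - b)))
  simp only [Lag, hfx, hfp, ← EReal.coe_add, ← EReal.coe_sub]
  congr 1
  rw [add_sub_cancel_left, norm_smul, inner_add_right, real_inner_smul_right,
    real_inner_self_eq_norm_sq, ← hAt, map_sub, Real.norm_eq_abs, abs_inv, abs_of_pos hβy,
    inner_sub_left, inner_sub_left, inner_sub_left]
  field_simp
  ring

theorem feasibility_le_smoothedGap_general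
    [FiniteDimensional ℝ X]
    (f : X → EReal) (A : X →L[ℝ] Y) (At : Y →L[ℝ] X) (b : Y)
    (hf_proper : EProper f) (hf_lsc : LowerSemicontinuous f) (hf_conv : EConvexOn f)
    (hAt : ∀ (u : X) (v : Y), ⟪A u, v⟫ = ⟪u, At v⟫)
    (βx βy : ℝ) (hβx : 0 < βx) (hβy : 0 < βy)
    (x : X) (y : Y) (hfx : f x < ⊤)
    (a : X) (ha : IsProj (fdom f) (-(At y)) a) :
    ((‖a + At y‖ ^ 2 + ‖A x - b‖ ^ 2 : ℝ) : EReal)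
      ≤ ((2 * max βx βy : ℝ) : EReal) * smoothedGap f A b βx βy x y x y := by
  obtain ⟨p, hp⟩ := exists_isProx hf_proper hf_lsc ha.1 (inv_pos.2 hβx) (x - βx⁻¹ • At y)
  have hp_top : f p ≠ ⊤ := hp.ne_top hfx.ne
  have hq : βx • (x - p) - At y ∈ ESubdiff f p := by
    convert hp.inv_smul_sub_mem_eSubdiff hf_conv hf_proper.1 hp_top using 1
    rw [inv_inv, sub_right_comm, smul_sub βx (x - p), smul_inv_smul₀ hβx.ne']
  have hproj : ‖a + At y‖ ≤ βx * ‖x - p‖ := by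
    have := ha.2 _ (mem_fdom_of_mem_eSubdiff hq hp_top (hf_proper.1 p))
    rwa [sub_neg_eq_add, sub_neg_eq_add, sub_add_cancel, norm_smul,
      Real.norm_of_nonneg hβx.le] at this
  obtain ⟨fx, hfx_eq⟩ : ∃ r : ℝ, f x = r :=
    ⟨_, (EReal.coe_toReal hfx.ne (hf_proper.1 x)).symm⟩
  obtain ⟨fp, hfp_eq⟩ : ∃ r : ℝ, f p = r := ⟨_, (EReal.coe_toReal hp_top (hf_proper.1 p)).symm⟩
  have hsub : fp + ⟪βx • (x - p) - At y, x - p⟫ ≤ fx := by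
    simpa only [hfx_eq, hfp_eq, ← EReal.coe_add, EReal.coe_le_coe_iff] using hq x
  have hgap : βx / 2 * ‖x - p‖ ^ 2 + ‖A x - b‖ ^ 2 / (2 * βy)
      ≤ fx - fp + ⟪x - p, At y⟫ - βx / 2 * ‖p - x‖ ^ 2 + ‖A x - b‖ ^ 2 / (2 * βy) := by
    rw [inner_sub_left, real_inner_smul_left, real_inner_self_eq_norm_sq,
      real_inner_comm] at hsub
    rw [norm_sub_rev p x]
    linarith
  calc ((‖a + At y‖ ^ 2 + ‖A x - b‖ ^ 2 : ℝ) : EReal)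
      ≤ ((2 * max βx βy * (fx - fp + ⟪x - p, At y⟫ - βx / 2 * ‖p - x‖ ^ 2
          + ‖A x - b‖ ^ 2 / (2 * βy)) : ℝ) : EReal) :=
        EReal.coe_le_coe_iff.2 (sq_add_sq_le_two_max_mul hβx hβy (norm_nonneg _) hproj hgap)
    _ ≤ ((2 * max βx βy : ℝ) : EReal) * smoothedGap f A b βx βy x y x y := by
        rw [EReal.coe_mul]
        exact mul_le_mul_of_nonneg_left (coe_le_smoothedGap_self hAt hβy hfx_eq hfp_eq)
          (EReal.coe_nonneg.2 (by positivity))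

/-- primal–dual feasibility bounded by the smoothed gap.
Assume `dom f*` is nonempty and closed.  Then for every `z = (x, y)` with `f(x) < +∞`,
with `a = Proj_{dom f*}(−Aᵀy)`,
`‖a + Aᵀy‖² + ‖Ax − b‖² ≤ 2 β_max G_β(z)`. -/
theorem feasibility_le_smoothedGap
    [FiniteDimensional ℝ X] [FiniteDimensional ℝ Y]
    (f : X → EReal) (A : X →L[ℝ] Y) (At : Y →L[ℝ] X) (b : Y)
    (hf_proper : EProper f) (hf_lsc : LowerSemicontinuous f) (hf_conv : EConvexOn f)
    (hAt : ∀ (u : X) (v : Y), ⟪A u, v⟫ = ⟪u, At v⟫)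
    (βx βy : ℝ) (hβx : 0 < βx) (hβy : 0 < βy)
    (hdom_ne : (fdom f).Nonempty) (hdom_closed : IsClosed (fdom f))
    (x : X) (y : Y) (hfx : f x < ⊤)
    (a : X) (ha : IsProj (fdom f) (-(At y)) a) :
    ((‖a + At y‖ ^ 2 + ‖A x - b‖ ^ 2 : ℝ) : EReal)
      ≤ ((2 * max βx βy : ℝ) : EReal) * smoothedGap f A b βx βy x y x y :=
  feasibility_le_smoothedGap_general f A At b hf_proper hf_lsc hf_conv hAt βx βy hβx hβy x y hfx a
    ha
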